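/- The standard symplectic form on ℝ², namely the antisymmetric bilinear map β : ℝ² × ℝ² → ℝ given by β(u, v) = u₁v₂ − u₂v₁, is surjective on isotropic loops. -/

import Mathlib

open MeasureTheory Topology ENNReal Filter

/-- `ℝ^n` with the Euclidean norm. -/
abbrev Euc (n : ℕ) : Type := EuclideanSpace ℝ (Fin n)

/-- `ℝ^{mn} = (ℝ^m)^n` with the Euclidean norm; a point `u` has components
`u_j = (u (j, ·)) ∈ ℝ^m`, `j = 1, …, n`. -/
abbrev EucN (m n : ℕ) : Type := EuclideanSpace ℝ (Fin n × Fin m)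

/-- The norm of the wedge of two vectors:
`|u ∧ v| = (|u|²|v|² − ⟨u,v⟩²)^{1/2}`. -/
noncomputable def wedgeNorm {V : Type*} [NormedAddCommGroup V] [InnerProductSpace ℝ V]
    (u v : V) : ℝ :=
  Real.sqrt (‖u‖ ^ 2 * ‖v‖ ^ 2 - (inner ℝ u v : ℝ) ^ 2)

/-- The `ℝ^s`-valued multi-symplectic form on `ℝ^{mn}` associated with an antisymmetric
bilinear map `β : ℝ^m × ℝ^m → ℝ^s`: `ω(u,v) = Σ_{j} β(u_j, v_j)`. -/
noncomputable def msymp {m s : ℕ} (β : Euc m →L[ℝ] Euc m →L[ℝ] Euc s) (n : ℕ)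
    (u v : EucN m n) : Euc s :=
  ∑ j : Fin n, β (WithLp.toLp 2 fun i => u (j, i)) (WithLp.toLp 2 fun i => v (j, i))

/-- The point `e^{2πit} = (cos 2πt, sin 2πt)` of the unit circle `S¹ ⊂ ℝ²`. -/
noncomputable def circlePt (t : ℝ) : Euc 2 :=
  (WithLp.equiv 2 (Fin 2 → ℝ)).symm ![Real.cos (2 * Real.pi * t), Real.sin (2 * Real.pi * t)]

/-- `β : ℝ^m × ℝ^m → ℝ^s` (antisymmetric bilinear) is surjective on isotropic loops with
constant `C > 0`: for every `λ > 0` and every `σ ∈ L^∞((0,1), ℝ^s)` with `∫₀¹ σ = 0`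
there are a Lipschitz loop `a : [0,1] → ℝ^m` with `β(a, a') = σ` a.e., `|a(0)| ≤ Cλ`,
`|a'| ≤ (C/λ)|σ|` a.e., and a Lipschitz isotropic homotopy `G : [0,1]² → ℝ^m` carrying
`a` to a point, with `Lip(G) ≤ C(λ + ‖σ‖_∞/λ)` and swept area
`∬ |∂_τG ∧ ∂_tG| ≤ C (∫₀¹|a'|)²`. -/
noncomputable def SurjOnIsotropicLoops {m s : ℕ}
    (β : Euc m →L[ℝ] Euc m →L[ℝ] Euc s) (C : ℝ) : Prop :=
  0 < C ∧
  ∀ lam : ℝ, 0 < lam →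
  ∀ σ : ℝ → Euc s,
    MemLp σ ⊤ (volume.restrict (Set.Ioo (0 : ℝ) 1)) →
    (∫ t in (0 : ℝ)..1, σ t) = 0 →
  ∃ (A : ℝ → Euc m) (G : ℝ × ℝ → Euc m) (Ka KG : NNReal),
    LipschitzOnWith Ka A (Set.Icc (0 : ℝ) 1) ∧
    A 0 = A 1 ∧
    ‖A 0‖ ≤ C * lam ∧
    (∀ᵐ t ∂ volume.restrict (Set.Ioo (0 : ℝ) 1),
      DifferentiableAt ℝ A t ∧ β (A t) (deriv A t) = σ t ∧
      ‖deriv A t‖ ≤ (C / lam) * ‖σ t‖) ∧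
    LipschitzOnWith KG G (Set.Icc (0 : ℝ) 1 ×ˢ Set.Icc (0 : ℝ) 1) ∧
    (KG : ℝ) ≤ C * (lam + (eLpNorm σ ⊤ (volume.restrict (Set.Ioo (0 : ℝ) 1))).toReal / lam) ∧
    (∀ τ ∈ Set.Icc (0 : ℝ) 1, G (τ, 0) = A τ) ∧
    (∀ τ ∈ Set.Icc (0 : ℝ) 1, ∀ τ' ∈ Set.Icc (0 : ℝ) 1, G (τ, 1) = G (τ', 1)) ∧
    (∀ t ∈ Set.Icc (0 : ℝ) 1, G (0, t) = G (1, t)) ∧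
    (∀ᵐ p ∂ (volume : Measure (ℝ × ℝ)).restrict (Set.Ioo (0 : ℝ) 1 ×ˢ Set.Ioo (0 : ℝ) 1),
      DifferentiableAt ℝ G p ∧
      β (fderiv ℝ G p (1, 0)) (fderiv ℝ G p (0, 1)) = 0) ∧
    (∫ p in Set.Ioo (0 : ℝ) 1 ×ˢ Set.Ioo (0 : ℝ) 1,
        wedgeNorm (fderiv ℝ G p (1, 0)) (fderiv ℝ G p (0, 1)))
      ≤ C * (∫ t in (0 : ℝ)..1, ‖deriv A t‖) ^ 2

open Metric

noncomputable def cir (x : ℝ) : Euc 2 :=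
  (EuclideanSpace.equiv (Fin 2) ℝ).symm ![Real.cos x, Real.sin x]

noncomputable def cir' (x : ℝ) : Euc 2 :=
  (EuclideanSpace.equiv (Fin 2) ℝ).symm ![-Real.sin x, Real.cos x]

@[simp] lemma cir_apply_zero (x : ℝ) : cir x 0 = Real.cos x := rfl
@[simp] lemma cir_apply_one (x : ℝ) : cir x 1 = Real.sin x := rfl
@[simp] lemma cir'_apply_zero (x : ℝ) : cir' x 0 = -Real.sin x := rfl
@[simp] lemma cir'_apply_one (x : ℝ) : cir' x 1 = Real.cos x := rfl

lemma hasDerivAt_cir (x : ℝ) : HasDerivAt cir (cir' x) x := by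
  have h1 : HasDerivAt (fun y => (![Real.cos y, Real.sin y] : Fin 2 → ℝ))
      ![-Real.sin x, Real.cos x] x := by
    rw [hasDerivAt_pi]
    intro i
    fin_cases i
    · simpa using Real.hasDerivAt_cos x
    · simpa using Real.hasDerivAt_sin x
  exact ((EuclideanSpace.equiv (Fin 2) ℝ).symm.toContinuousLinearMap.hasFDerivAt).comp_hasDerivAt
    x h1

lemma norm_cir (x : ℝ) : ‖cir x‖ = 1 := by
  simp [cir, EuclideanSpace.norm_eq, Fin.sum_univ_two, sq_abs]

lemma norm_cir' (x : ℝ) : ‖cir' x‖ = 1 := by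
  simp [cir', EuclideanSpace.norm_eq, Fin.sum_univ_two, sq_abs]

lemma lipschitz_cir : LipschitzWith 1 cir := by
  apply lipschitzWith_of_nnnorm_deriv_le (fun x => (hasDerivAt_cir x).differentiableAt)
  intro x
  rw [(hasDerivAt_cir x).deriv, ← NNReal.coe_le_coe]
  simp [coe_nnnorm, norm_cir']

lemma dist_cir (a b : ℝ) : ‖cir a - cir b‖ ≤ |a - b| := by
  have := lipschitz_cir.dist_le_mul a b
  simpa [dist_eq_norm, Real.dist_eq] using this

lemma wedgeNorm_smul_smul (a b : ℝ) (w : Euc 2) : wedgeNorm (a • w) (b • w) = 0 := by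
  have h : ‖a • w‖ ^ 2 * ‖b • w‖ ^ 2 - (inner ℝ (a • w) (b • w) : ℝ) ^ 2 = 0 := by
    rw [norm_smul, norm_smul, real_inner_smul_left, real_inner_smul_right,
      real_inner_self_eq_norm_sq]
    simp [mul_pow, sq_abs]; ring
  rw [wedgeNorm, h, Real.sqrt_zero]

lemma euc1_norm (x : Euc 1) : ‖x‖ = |x 0| := by
  simp [EuclideanSpace.norm_eq, Fin.sum_univ_one, Real.sqrt_sq_eq_abs]

lemma ftc_ae {g : ℝ → ℝ} (hg : Integrable g volume) :
    ∀ᵐ x ∂(volume : Measure ℝ), HasDerivAt (fun y => ∫ s in (0:ℝ)..y, g s) (g x) x := by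
  have hleb : ∀ᵐ x ∂(volume : Measure ℝ),
      Tendsto (fun r => ⨍ y in closedBall x r, ‖g y - g x‖) (𝓝[>] 0) (𝓝 0) := by
    filter_upwards [IsUnifLocDoublingMeasure.ae_tendsto_average_norm_sub
      (μ := (volume : Measure ℝ)) hg.locallyIntegrable 1] with x hx
    exact hx (fun _ => x) id tendsto_id
      (by filter_upwards [self_mem_nhdsWithin] with r hr; simp [abs_of_pos, le_of_lt (show (0:ℝ) < r from hr)])
  filter_upwards [hleb] with x hx
  rw [hasDerivAt_iff_isLittleO, Asymptotics.isLittleO_iff]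
  intro c hc
  have h1 : ∀ᶠ r in 𝓝[>] (0:ℝ), ⨍ y in closedBall x r, ‖g y - g x‖ ≤ c / 2 :=
    (hx.eventually_lt_const (by linarith)).mono fun r hr => hr.le
  have habs : Tendsto (fun x' => |x' - x|) (𝓝[≠] x) (𝓝[>] 0) := by
    rw [tendsto_nhdsWithin_iff]
    constructor
    · have : Tendsto (fun x' => |x' - x|) (𝓝 x) (𝓝 |x - x|) :=
        (continuous_abs.comp (continuous_id.sub continuous_const)).continuousAt
      simpa using this.mono_left nhdsWithin_le_nhds
    · filter_upwards [self_mem_nhdsWithin] with y hy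
      exact abs_pos.2 (sub_ne_zero.2 hy)
  have h2 := habs.eventually h1
  rw [eventually_nhdsWithin_iff] at h2
  filter_upwards [h2] with x' hx'
  by_cases hxx : x' = x
  · simp [hxx]
  · specialize hx' hxx
    set r := |x' - x| with hrdef
    have hr : 0 < r := abs_pos.2 (sub_ne_zero.2 hxx)
    have hsub : Set.uIoc x x' ⊆ closedBall x r := by
      intro y hy
      rw [Real.closedBall_eq_Icc]
      rcases hy with ⟨hy1, hy2⟩
      have h3 : -|x' - x| ≤ x' - x := neg_abs_le _
      have h4 : x' - x ≤ |x' - x| := le_abs_self _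
      constructor
      · have : x - r ≤ min x x' := le_min (by linarith) (by linarith)
        linarith
      · have : max x x' ≤ x + r := max_le (by linarith) (by linarith)
        linarith
    have hcb : IntegrableOn (fun y => ‖g y - g x‖) (closedBall x r) volume :=
      (hg.integrableOn.sub (integrableOn_const measure_closedBall_lt_top.ne)).norm
    have hvol : (volume (closedBall x r)).toReal = 2 * r := by
      rw [Real.volume_closedBall, ENNReal.toReal_ofReal (by linarith)]
    have havg : ∫ y in closedBall x r, ‖g y - g x‖ ≤ 2 * r * (c / 2) := by
      have := setAverage_eq (fun y => ‖g y - g x‖) (μ := volume) (closedBall x r)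
      rw [measureReal_def, hvol] at this
      have h2r : (0:ℝ) < 2 * r := by linarith
      have : ∫ y in closedBall x r, ‖g y - g x‖ = 2 * r * ⨍ y in closedBall x r, ‖g y - g x‖ := by
        rw [this, smul_eq_mul]; field_simp
      rw [this]
      exact mul_le_mul_of_nonneg_left hx' (by linarith)
    have hF : (∫ s in (0:ℝ)..x', g s) - (∫ s in (0:ℝ)..x, g s) - (x' - x) • g x
        = ∫ s in x..x', (g s - g x) := by
      rw [intervalIntegral.integral_sub hg.intervalIntegrable intervalIntegrable_const,
        intervalIntegral.integral_const,
        intervalIntegral.integral_interval_sub_left hg.intervalIntegrable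
          hg.intervalIntegrable]
    calc ‖(∫ s in (0:ℝ)..x', g s) - (∫ s in (0:ℝ)..x, g s) - (x' - x) • g x‖
        = ‖∫ s in x..x', (g s - g x)‖ := by rw [hF]
      _ ≤ ∫ y in Set.uIoc x x', ‖g y - g x‖ :=
          intervalIntegral.norm_integral_le_integral_norm_uIoc
      _ ≤ ∫ y in closedBall x r, ‖g y - g x‖ :=
          setIntegral_mono_set hcb (Eventually.of_forall fun y => norm_nonneg _)
            (HasSubset.Subset.eventuallyLE hsub)
      _ ≤ 2 * r * (c / 2) := havg
      _ = c * ‖x' - x‖ := by rw [Real.norm_eq_abs, ← hrdef]; ring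

set_option maxHeartbeats 1000000 in
/-- the standard symplectic form `β(u,v) = u₁v₂ − u₂v₁` on `ℝ²` (the
bracket of the three-dimensional Heisenberg algebra) is surjective on isotropic loops. -/
theorem stmt10 (β : Euc 2 →L[ℝ] Euc 2 →L[ℝ] Euc 1)
    (hβ : ∀ u v : Euc 2, ∀ k : Fin 1, β u v k = u 0 * v 1 - u 1 * v 0) :
    ∃ C : ℝ, SurjOnIsotropicLoops β C := by
  refine ⟨2, by norm_num, ?_⟩
  intro lam hlam σ hσ hσ0
  have hIoo : MeasurableSet (Set.Ioo (0:ℝ) 1) := measurableSet_Ioo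
  haveI hfin : IsFiniteMeasure (volume.restrict (Set.Ioo (0:ℝ) 1)) :=
    ⟨by rw [Measure.restrict_apply_univ]; exact measure_Ioo_lt_top⟩
  set M : ℝ := (eLpNorm σ ⊤ (volume.restrict (Set.Ioo (0:ℝ) 1))).toReal with hMdef
  have hM0 : 0 ≤ M := ENNReal.toReal_nonneg
  have hσint : Integrable σ (volume.restrict (Set.Ioo (0:ℝ) 1)) := hσ.integrable le_top
  have hbd : ∀ᵐ t ∂(volume.restrict (Set.Ioo (0:ℝ) 1)), ‖σ t‖ ≤ M := by
    have h1 := enorm_ae_le_eLpNormEssSup σ (volume.restrict (Set.Ioo (0:ℝ) 1))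
    have hlt : eLpNormEssSup σ (volume.restrict (Set.Ioo (0:ℝ) 1)) ≠ ⊤ := by
      have h2 := hσ.2
      rw [eLpNorm_exponent_top] at h2
      exact h2.ne
    filter_upwards [h1] with t ht
    have h3 : ((‖σ t‖₊ : ℝ≥0∞)).toReal ≤ (eLpNormEssSup σ (volume.restrict (Set.Ioo (0:ℝ) 1))).toReal :=
      ENNReal.toReal_mono hlt ht
    simpa [hMdef, eLpNorm_exponent_top] using h3
  have hbd' : ∀ᵐ t ∂(volume : Measure ℝ), t ∈ Set.Ioo (0:ℝ) 1 → ‖σ t‖ ≤ M :=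
    (ae_restrict_iff' hIoo).1 hbd
  set σ1 : ℝ → ℝ := fun t => σ t 0 with hσ1def
  set g : ℝ → ℝ := (Set.Ioo (0:ℝ) 1).indicator σ1 with hgdef
  have hσ1le : ∀ t, |σ1 t| = ‖σ t‖ := fun t => (euc1_norm (σ t)).symm
  have hg_bd : ∀ᵐ t ∂(volume : Measure ℝ), ‖g t‖ ≤ M := by
    filter_upwards [hbd'] with t ht
    by_cases h : t ∈ Set.Ioo (0:ℝ) 1
    · rw [hgdef]
      simp only [Set.indicator_of_mem h, Real.norm_eq_abs]
      rw [hσ1le]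
      exact ht h
    · rw [hgdef]
      simp [Set.indicator_of_notMem h, hM0]
  have hg_meas : AEStronglyMeasurable g volume := by
    rw [hgdef, aestronglyMeasurable_indicator_iff hIoo]
    exact (EuclideanSpace.proj (0 : Fin 1)).continuous.comp_aestronglyMeasurable hσ.1
  have hg_int : Integrable g volume := by
    refine Integrable.mono' (g := (Set.Ioo (0:ℝ) 1).indicator fun _ => M) ?_ hg_meas ?_
    · rw [integrable_indicator_iff hIoo]
      exact integrableOn_const measure_Ioo_lt_top.ne
    · filter_upwards [hbd'] with t ht
      by_cases h : t ∈ Set.Ioo (0:ℝ) 1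
      · rw [hgdef]
        simp only [Set.indicator_of_mem h, Real.norm_eq_abs]
        rw [hσ1le]
        exact ht h
      · rw [hgdef]
        simp [Set.indicator_of_notMem h]
  set θ : ℝ → ℝ := fun y => ∫ s in (0:ℝ)..y, g s with hθdef
  have hθ0 : θ 0 = 0 := intervalIntegral.integral_same
  have hθ1 : θ 1 = 0 := by
    rw [hθdef]
    simp only
    rw [intervalIntegral.integral_of_le zero_le_one, integral_Ioc_eq_integral_Ioo]
    have hcong : ∫ s in Set.Ioo (0:ℝ) 1, g s = ∫ s in Set.Ioo (0:ℝ) 1, σ1 s :=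
      setIntegral_congr_fun hIoo (fun x hx => by simp [hgdef, Set.indicator_of_mem hx])
    rw [hcong]
    have hproj : ∫ s in Set.Ioo (0:ℝ) 1, σ1 s
        = (EuclideanSpace.proj (0 : Fin 1)) (∫ s in Set.Ioo (0:ℝ) 1, σ s) := by
      exact ContinuousLinearMap.integral_comp_comm (EuclideanSpace.proj (0 : Fin 1)) hσint
    rw [hproj]
    have hz : ∫ s in Set.Ioo (0:ℝ) 1, σ s = 0 := by
      rw [← integral_Ioc_eq_integral_Ioo, ← intervalIntegral.integral_of_le zero_le_one]
      exact hσ0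
    rw [hz, map_zero]
  have hθlip : ∀ a b : ℝ, |θ a - θ b| ≤ M * |a - b| := by
    intro a b
    have heq : θ a - θ b = ∫ s in b..a, g s :=
      intervalIntegral.integral_interval_sub_left hg_int.intervalIntegrable
        hg_int.intervalIntegrable
    rw [heq, ← Real.norm_eq_abs]
    have hb : ∀ᵐ x ∂(volume : Measure ℝ), x ∈ Set.uIoc b a → ‖g x‖ ≤ M := by
      filter_upwards [hg_bd] with x hx _
      exact hx
    exact intervalIntegral.norm_integral_le_of_norm_le_const_ae hb
  have hθbd : ∀ y ∈ Set.Icc (0:ℝ) 1, |θ y| ≤ M := by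
    intro y hy
    have h1 := hθlip y 0
    rw [hθ0, sub_zero, sub_zero] at h1
    calc |θ y| ≤ M * |y| := h1
      _ ≤ M * 1 := by
          apply mul_le_mul_of_nonneg_left _ hM0
          rw [abs_le]
          exact ⟨by linarith [hy.1], hy.2⟩
      _ = M := mul_one M
  have hθderiv : ∀ᵐ x ∂(volume : Measure ℝ), HasDerivAt θ (g x) x := ftc_ae hg_int
  set A : ℝ → Euc 2 := fun τ => lam • cir (θ τ / lam ^ 2) with hAdef
  set G : ℝ × ℝ → Euc 2 := fun p => lam • cir ((1 - p.2) * (θ p.1 / lam ^ 2)) with hGdef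
  have hdistA : ∀ a b : ℝ, dist (A a) (A b) ≤ M / lam * dist a b := by
    intro a b
    rw [dist_eq_norm, hAdef]
    simp only
    rw [← smul_sub, norm_smul, Real.norm_eq_abs, abs_of_pos hlam]
    calc lam * ‖cir (θ a / lam ^ 2) - cir (θ b / lam ^ 2)‖
        ≤ lam * |θ a / lam ^ 2 - θ b / lam ^ 2| := by
          apply mul_le_mul_of_nonneg_left (dist_cir _ _) hlam.le
      _ = |θ a - θ b| / lam := by
          rw [div_sub_div_same, abs_div, abs_of_pos (pow_pos hlam 2)]
          field_simp
      _ ≤ M * |a - b| / lam := (div_le_div_iff_of_pos_right hlam).2 (hθlip a b)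
      _ = M / lam * dist a b := by rw [Real.dist_eq]; ring
  have hAlip : LipschitzWith (M / lam).toNNReal A := by
    apply LipschitzWith.of_dist_le_mul
    intro a b
    rw [Real.coe_toNNReal _ (div_nonneg hM0 hlam.le)]
    exact hdistA a b
  have hdistG : ∀ p q : ℝ × ℝ, p ∈ Set.Icc (0:ℝ) 1 ×ˢ Set.Icc (0:ℝ) 1 →
      q ∈ Set.Icc (0:ℝ) 1 ×ˢ Set.Icc (0:ℝ) 1 →
      dist (G p) (G q) ≤ 2 * M / lam * dist p q := by
    intro p q hp hq
    rw [dist_eq_norm, hGdef]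
    simp only
    rw [← smul_sub, norm_smul, Real.norm_eq_abs, abs_of_pos hlam]
    set u := (1 - p.2) * (θ p.1 / lam ^ 2) with hu
    set v := (1 - q.2) * (θ q.1 / lam ^ 2) with hv
    have h1 : ‖cir u - cir v‖ ≤ |u - v| := dist_cir u v
    have h2 : |1 - p.2| ≤ 1 := by
      rw [abs_le]
      exact ⟨by linarith [hp.2.2], by linarith [hp.2.1]⟩
    have h3 : |θ q.1| ≤ M := hθbd q.1 hq.1
    have key : |u - v| ≤ M / lam ^ 2 * (|p.1 - q.1| + |p.2 - q.2|) := by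
      have hsplit : u - v = (1 - p.2) * ((θ p.1 - θ q.1) / lam ^ 2)
          + (p.2 - q.2) * (-(θ q.1 / lam ^ 2)) := by
        rw [hu, hv]; ring
      rw [hsplit]
      have e1 : |(1 - p.2) * ((θ p.1 - θ q.1) / lam ^ 2)|
          ≤ 1 * (M * |p.1 - q.1| / lam ^ 2) := by
        rw [abs_mul, abs_div, abs_of_pos (pow_pos hlam 2)]
        gcongr
        exact hθlip p.1 q.1
      have e2 : |(p.2 - q.2) * (-(θ q.1 / lam ^ 2))| ≤ |p.2 - q.2| * (M / lam ^ 2) := by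
        rw [abs_mul, abs_neg, abs_div, abs_of_pos (pow_pos hlam 2)]
        gcongr
      calc |(1 - p.2) * ((θ p.1 - θ q.1) / lam ^ 2) + (p.2 - q.2) * (-(θ q.1 / lam ^ 2))|
          ≤ |(1 - p.2) * ((θ p.1 - θ q.1) / lam ^ 2)| + |(p.2 - q.2) * (-(θ q.1 / lam ^ 2))| :=
            abs_add_le _ _
        _ ≤ 1 * (M * |p.1 - q.1| / lam ^ 2) + |p.2 - q.2| * (M / lam ^ 2) := by linarith
        _ = M / lam ^ 2 * (|p.1 - q.1| + |p.2 - q.2|) := by ring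
    have hd1 : |p.1 - q.1| ≤ dist p q := by
      rw [← Real.dist_eq]
      exact (le_max_left _ _).trans (le_of_eq (Prod.dist_eq).symm)
    have hd2 : |p.2 - q.2| ≤ dist p q := by
      rw [← Real.dist_eq]
      exact (le_max_right _ _).trans (le_of_eq (Prod.dist_eq).symm)
    have hM2 : 0 ≤ M / lam ^ 2 := div_nonneg hM0 (pow_pos hlam 2).le
    calc lam * ‖cir u - cir v‖ ≤ lam * |u - v| := mul_le_mul_of_nonneg_left h1 hlam.le
      _ ≤ lam * (M / lam ^ 2 * (|p.1 - q.1| + |p.2 - q.2|)) :=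
          mul_le_mul_of_nonneg_left key hlam.le
      _ ≤ lam * (M / lam ^ 2 * (dist p q + dist p q)) := by
          apply mul_le_mul_of_nonneg_left _ hlam.le
          apply mul_le_mul_of_nonneg_left _ hM2
          linarith
      _ = 2 * M / lam * dist p q := by field_simp; ring
  have hprodae : ∀ᵐ p ∂(volume : Measure (ℝ × ℝ)), HasDerivAt θ (g p.1) p.1 := by
    have hnull : (volume : Measure ℝ) {x | ¬ HasDerivAt θ (g x) x} = 0 := hθderiv
    rw [ae_iff]
    have hset : {p : ℝ × ℝ | ¬ HasDerivAt θ (g p.1) p.1}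
        = {x | ¬ HasDerivAt θ (g x) x} ×ˢ (Set.univ : Set ℝ) := by
      ext p; simp [Set.mem_prod]
    rw [hset, MeasureTheory.Measure.volume_eq_prod, Measure.prod_prod, hnull, zero_mul]
  have hGae : ∀ᵐ p ∂((volume : Measure (ℝ × ℝ)).restrict
      (Set.Ioo (0:ℝ) 1 ×ˢ Set.Ioo (0:ℝ) 1)),
      DifferentiableAt ℝ G p ∧ ∃ a b : ℝ, ∃ w : Euc 2,
        fderiv ℝ G p (1, 0) = a • w ∧ fderiv ℝ G p (0, 1) = b • w := by
    filter_upwards [ae_restrict_of_ae hprodae] with p hp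
    set φ := (1 - p.2) * (θ p.1 / lam ^ 2) with hφ
    have h1 : HasFDerivAt (fun q : ℝ × ℝ => θ q.1 / lam ^ 2)
        ((g p.1 / lam ^ 2) • ContinuousLinearMap.fst ℝ ℝ ℝ) p :=
      HasDerivAt.comp_hasFDerivAt p (hp.div_const _) hasFDerivAt_fst
    have h2 : HasFDerivAt (fun q : ℝ × ℝ => 1 - q.2)
        ((0 : ℝ × ℝ →L[ℝ] ℝ) - ContinuousLinearMap.snd ℝ ℝ ℝ) p :=
      (hasFDerivAt_const 1 p).sub hasFDerivAt_snd
    obtain ⟨l, hl⟩ : ∃ l : ℝ × ℝ →L[ℝ] ℝ,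
        HasFDerivAt (fun q : ℝ × ℝ => (1 - q.2) * (θ q.1 / lam ^ 2)) l p := ⟨_, h2.mul h1⟩
    have hG' : HasFDerivAt G
        (lam • ((ContinuousLinearMap.smulRight (1 : ℝ →L[ℝ] ℝ) (cir' φ)).comp l)) p := by
      rw [hGdef]
      exact ((hasDerivAt_iff_hasFDerivAt.1 (hasDerivAt_cir φ)).comp p hl).const_smul lam
    refine ⟨hG'.differentiableAt, lam * l (1, 0), lam * l (0, 1), cir' φ, ?_, ?_⟩ <;>
    · rw [hG'.fderiv]
      simp [ContinuousLinearMap.smul_apply, ContinuousLinearMap.comp_apply,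
        ContinuousLinearMap.smulRight_apply, ContinuousLinearMap.one_apply, smul_smul]
  refine ⟨A, G, (M / lam).toNNReal, (2 * M / lam).toNNReal,
    hAlip.lipschitzOnWith, ?_, ?_, ?_, ?_, ?_, ?_, ?_, ?_, ?_, ?_⟩
  · rw [hAdef]; simp only; rw [hθ0, hθ1]
  · rw [hAdef]; simp only
    rw [norm_smul, norm_cir, Real.norm_eq_abs, abs_of_pos hlam, mul_one]
    linarith
  · filter_upwards [ae_restrict_of_ae hθderiv, ae_restrict_mem hIoo] with t ht htm
    have hgt : g t = σ1 t := by rw [hgdef]; exact Set.indicator_of_mem htm σ1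
    rw [hgt] at ht
    have h1 : HasDerivAt (fun y => θ y / lam ^ 2) (σ1 t / lam ^ 2) t := ht.div_const _
    have h2 : HasDerivAt (fun y => cir (θ y / lam ^ 2))
        ((σ1 t / lam ^ 2) • cir' (θ t / lam ^ 2)) t :=
      HasDerivAt.scomp t (hasDerivAt_cir _) h1
    have h3 : HasDerivAt A (lam • ((σ1 t / lam ^ 2) • cir' (θ t / lam ^ 2))) t := by
      rw [hAdef]; exact h2.const_smul lam
    have hderivA : deriv A t = lam • ((σ1 t / lam ^ 2) • cir' (θ t / lam ^ 2)) := h3.deriv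
    refine ⟨h3.differentiableAt, ?_, ?_⟩
    · ext k
      rw [hβ]
      have hk : σ t k = σ1 t := by
        have hk0 : k = 0 := Subsingleton.elim k 0
        rw [hk0, hσ1def]
      rw [hk, hderivA]
      have hA0 : A t 0 = lam * Real.cos (θ t / lam ^ 2) := by
        rw [hAdef]; simp [PiLp.smul_apply, smul_eq_mul]
      have hA1 : A t 1 = lam * Real.sin (θ t / lam ^ 2) := by
        rw [hAdef]; simp [PiLp.smul_apply, smul_eq_mul]
      have hd0 : (lam • ((σ1 t / lam ^ 2) • cir' (θ t / lam ^ 2))) 0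
          = lam * ((σ1 t / lam ^ 2) * (-Real.sin (θ t / lam ^ 2))) := by
        simp [PiLp.smul_apply, smul_eq_mul]
      have hd1 : (lam • ((σ1 t / lam ^ 2) • cir' (θ t / lam ^ 2))) 1
          = lam * ((σ1 t / lam ^ 2) * Real.cos (θ t / lam ^ 2)) := by
        simp [PiLp.smul_apply, smul_eq_mul]
      rw [hA0, hA1, hd0, hd1]
      have htrig := Real.sin_sq_add_cos_sq (θ t / lam ^ 2)
      field_simp
      linear_combination (σ1 t) * htrig
    · rw [hderivA, norm_smul, norm_smul, norm_cir', Real.norm_eq_abs, Real.norm_eq_abs,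
        abs_of_pos hlam, mul_one, abs_div, abs_of_pos (pow_pos hlam 2), ← hσ1le t]
      have hx0 : (0:ℝ) ≤ |σ1 t| := abs_nonneg _
      rw [show lam * (|σ1 t| / lam ^ 2) = |σ1 t| / lam by field_simp,
        show (2:ℝ) / lam * |σ1 t| = 2 * |σ1 t| / lam by ring]
      exact (div_le_div_iff_of_pos_right hlam).2 (by linarith)
  · apply LipschitzOnWith.of_dist_le_mul
    intro p hp q hq
    rw [Real.coe_toNNReal _ (div_nonneg (by linarith) hlam.le)]
    exact hdistG p q hp hq
  · rw [Real.coe_toNNReal _ (div_nonneg (by linarith) hlam.le)]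
    have hMl : 0 ≤ M / lam := div_nonneg hM0 hlam.le
    rw [show (2:ℝ) * M / lam = 2 * (M / lam) by ring]
    linarith
  · intro τ _
    rw [hGdef, hAdef]; simp only; norm_num
  · intro τ _ τ' _
    rw [hGdef]; simp only; norm_num
  · intro t _
    rw [hGdef]; simp only [hθ0, hθ1]
  · filter_upwards [hGae] with p hp
    obtain ⟨hdiff, a, b, w, h1, h2⟩ := hp
    refine ⟨hdiff, ?_⟩
    rw [h1, h2]
    ext k
    rw [hβ]
    simp [PiLp.smul_apply, smul_eq_mul]
    ring
  · have hzero : (fun p => wedgeNorm (fderiv ℝ G p (1, 0)) (fderiv ℝ G p (0, 1)))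
        =ᵐ[(volume : Measure (ℝ × ℝ)).restrict (Set.Ioo (0:ℝ) 1 ×ˢ Set.Ioo (0:ℝ) 1)]
        (fun _ => (0:ℝ)) := by
      filter_upwards [hGae] with p hp
      obtain ⟨-, a, b, w, h1, h2⟩ := hp
      simp [h1, h2, wedgeNorm_smul_smul]
    rw [integral_congr_ae hzero, integral_zero]
    positivity
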